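/- Let Z be a real 4×2 matrix with top 2×2 block X and bottom 2×2 block Y, and let U₁,…,U₆ be the six 2×2 minors (Plücker coordinates) of Z from the row pairs {1,2},{1,3},{1,4},{2,3},{2,4},{3,4}. If det(X + iY) ≠ 0, then the trace of the matrix Q = (X − iY)(X + iY)⁻¹ satisfies Trace(Q) = 2(U₁ + U₆) / det(X + iY). -/

import Mathlib

open Matrix

/-- The 2×2 minor of a real 4×2 matrix `Z` formed from rows `p` and `q`. -/
def pminor (Z : Matrix (Fin 4) (Fin 2) ℝ) (p q : Fin 4) : ℝ :=
  Z p 0 * Z q 1 - Z q 0 * Z p 1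

/-- The complex 2×2 matrix `X - iY`, where `X` is the top 2×2 block of `Z` and
`Y` is the bottom 2×2 block of `Z`. -/
noncomputable def XmiY (Z : Matrix (Fin 4) (Fin 2) ℝ) : Matrix (Fin 2) (Fin 2) ℂ :=
  !![(Z 0 0 : ℂ) - Complex.I * (Z 2 0 : ℂ), (Z 0 1 : ℂ) - Complex.I * (Z 2 1 : ℂ);
     (Z 1 0 : ℂ) - Complex.I * (Z 3 0 : ℂ), (Z 1 1 : ℂ) - Complex.I * (Z 3 1 : ℂ)]

/-- The complex 2×2 matrix `X + iY`, where `X` is the top 2×2 block of `Z` and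
`Y` is the bottom 2×2 block of `Z`. -/
noncomputable def XpiY (Z : Matrix (Fin 4) (Fin 2) ℝ) : Matrix (Fin 2) (Fin 2) ℂ :=
  !![(Z 0 0 : ℂ) + Complex.I * (Z 2 0 : ℂ), (Z 0 1 : ℂ) + Complex.I * (Z 2 1 : ℂ);
     (Z 1 0 : ℂ) + Complex.I * (Z 3 0 : ℂ), (Z 1 1 : ℂ) + Complex.I * (Z 3 1 : ℂ)]

/-- If `det(X + iY) ≠ 0`, then the matrix `Q = (X - iY)(X + iY)⁻¹` satisfies
`Trace(Q) = 2(U₁ + U₆)/det(X + iY)`, where `U₁` and `U₆` are the Plücker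
coordinates of `Z` from the row pairs {1,2} and {3,4}. -/
theorem stmt6 (Z : Matrix (Fin 4) (Fin 2) ℝ) (hdet : (XpiY Z).det ≠ 0) :
    Matrix.trace (XmiY Z * (XpiY Z)⁻¹)
      = 2 * ((pminor Z 0 1 : ℂ) + (pminor Z 2 3 : ℂ)) / (XpiY Z).det := by
  rw [Matrix.inv_def, Matrix.trace]
  simp only [XmiY, XpiY, pminor, Matrix.adjugate_fin_two, Matrix.det_fin_two,
    Matrix.smul_apply, Matrix.mul_apply, Fin.sum_univ_two, Matrix.cons_val', Matrix.cons_val_zero,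
    Matrix.cons_val_one, Matrix.head_cons, Matrix.head_fin_const, Matrix.empty_val',
    Matrix.cons_val_fin_one, Matrix.diag_apply, smul_eq_mul, Matrix.of_apply,
    Ring.inverse_eq_inv']
  have hd : ((Z 0 0 : ℂ) + Complex.I * (Z 2 0)) * ((Z 1 1 : ℂ) + Complex.I * (Z 3 1)) -
      ((Z 0 1 : ℂ) + Complex.I * (Z 2 1)) * ((Z 1 0 : ℂ) + Complex.I * (Z 3 0)) ≠ 0 := by
    have := hdet
    rw [XpiY, Matrix.det_fin_two] at this
    simpa using this
  field_simp
  ring_nf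
  push_cast
  linear_combination (2 * (Z 2 1 : ℂ) * (Z 3 0) - 2 * (Z 2 0 : ℂ) * (Z 3 1)) * Complex.I_sq
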